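/- arXiv:2209.01286 — 6 statements merged into one kernel-verified Lean document; each statement's English description precedes it below -/
import Mathlib

section
/- Fix a type T of tuples, predicates φ_i, φ_j, p : T → Prop, and for a finite multiset D of elements of T write c(ψ, D) for the number of tuples in D satisfying ψ, counted with multiplicity. Define the COUNT-influence I(p; D) = (c(φ_i ∧ p, D) − c(φ_j ∧ p, D)) · min(c(φ_i ∧ ¬p, D), c(φ_j ∧ ¬p, D)) / (max(c(φ_i, D), c(φ_j, D)) + 1), computed over the real numbers. Then for all neighboring databases D and D', |I(p; D) − I(p; D')| ≤ 4. -/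
lemma aux_real (x x' m m' M M' : ℝ)
    (hm0 : 0 ≤ m) (hM0 : 0 ≤ M)
    (hxM : |x| ≤ M) (hdx : |x' - x| ≤ 1)
    (hmm' : m ≤ m') (hdm : m' - m ≤ 1)
    (hMM' : M ≤ M') (hdM : M' - M ≤ 1)
    (hmM : m ≤ M) (hm'M' : m' ≤ M') :
    |x' * m' / (M' + 1) - x * m / (M + 1)| ≤ 4 := by
  have hM1 : (0:ℝ) < M + 1 := by linarith
  have hM'1 : (0:ℝ) < M' + 1 := by linarith
  rw [abs_le] at hxM hdx ⊢
  obtain ⟨hx1, hx2⟩ := hxM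
  obtain ⟨hd1, hd2⟩ := hdx
  have hm'0 : 0 ≤ m' := le_trans hm0 hmm'
  -- key bounds
  have k1 : (x' - x) * m' ≤ m' := by nlinarith
  have k1' : -m' ≤ (x' - x) * m' := by nlinarith
  have k2 : x * (m' - m) ≤ M := by nlinarith
  have k2' : -M ≤ x * (m' - m) := by nlinarith
  have hxm1 : x * m ≤ M * M := by nlinarith
  have hxm2 : -(M * M) ≤ x * m := by nlinarith
  have k3 : x * m * (M' - M) ≤ M * M := by
    nlinarith [mul_nonneg (by linarith : (0:ℝ) ≤ M * M - x * m) (by linarith : (0:ℝ) ≤ M' - M),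
      mul_nonneg (mul_nonneg hM0 hM0) (by linarith : (0:ℝ) ≤ 1 - (M' - M))]
  have k3' : -(M * M) ≤ x * m * (M' - M) := by
    nlinarith [mul_nonneg (by linarith : (0:ℝ) ≤ M * M + x * m) (by linarith : (0:ℝ) ≤ M' - M),
      mul_nonneg (mul_nonneg hM0 hM0) (by linarith : (0:ℝ) ≤ 1 - (M' - M))]
  constructor
  · rw [div_sub_div _ _ (ne_of_gt hM'1) (ne_of_gt hM1), le_div_iff₀ (by positivity)]
    nlinarith [mul_pos hM1 hM'1, mul_le_mul_of_nonneg_right k1' (le_of_lt hM1),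
      mul_le_mul_of_nonneg_right k2' (le_of_lt hM1)]
  · rw [div_sub_div _ _ (ne_of_gt hM'1) (ne_of_gt hM1), div_le_iff₀ (by positivity)]
    nlinarith [mul_pos hM1 hM'1, mul_le_mul_of_nonneg_right k1 (le_of_lt hM1),
      mul_le_mul_of_nonneg_right k2 (le_of_lt hM1)]

/-- Sensitivity of the COUNT influence function: for neighboring databases `D, D'`,
`|I(p; D) − I(p; D')| ≤ 4`. -/
theorem count_influence_sensitivity {T : Type*}
    (φi φj p : T → Prop) [DecidablePred φi] [DecidablePred φj] [DecidablePred p]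
    (I : Multiset T → ℝ)
    (hI : ∀ D : Multiset T,
      I D = (((D.filter fun t => φi t ∧ p t).card : ℝ)
              - ((D.filter fun t => φj t ∧ p t).card : ℝ))
            * min ((D.filter fun t => φi t ∧ ¬ p t).card : ℝ)
                  ((D.filter fun t => φj t ∧ ¬ p t).card : ℝ)
            / (max ((D.filter φi).card : ℝ) ((D.filter φj).card : ℝ) + 1))
    (D D' : Multiset T)
    (hneighbor : (∃ t, D' = t ::ₘ D) ∨ (∃ t, D = t ::ₘ D')) :
    |I D - I D'| ≤ 4 := by
  have key : ∀ (E : Multiset T) (t : T), |I (t ::ₘ E) - I E| ≤ 4 := by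
    intro E t
    rw [hI, hI]
    simp only [Multiset.filter_cons, Multiset.card_add, apply_ite Multiset.card,
      Multiset.card_singleton, Multiset.card_zero]
    push_cast
    set a : ℝ := ((E.filter fun s => φi s ∧ p s).card : ℝ) with ha
    set b : ℝ := ((E.filter fun s => φj s ∧ p s).card : ℝ) with hb
    set u : ℝ := ((E.filter fun s => φi s ∧ ¬ p s).card : ℝ) with hu
    set v : ℝ := ((E.filter fun s => φj s ∧ ¬ p s).card : ℝ) with hv
    set ci : ℝ := ((E.filter φi).card : ℝ) with hci
    set cj : ℝ := ((E.filter φj).card : ℝ) with hcj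
    set ei : ℝ := if φi t ∧ p t then (1:ℝ) else 0 with hei
    set ej : ℝ := if φj t ∧ p t then (1:ℝ) else 0 with hej
    set fi : ℝ := if φi t ∧ ¬ p t then (1:ℝ) else 0 with hfi
    set fj : ℝ := if φj t ∧ ¬ p t then (1:ℝ) else 0 with hfj
    set gi : ℝ := if φi t then (1:ℝ) else 0 with hgi
    set gj : ℝ := if φj t then (1:ℝ) else 0 with hgj
    -- basic bounds on indicator terms
    have hei01 : 0 ≤ ei ∧ ei ≤ 1 := by rw [hei]; split_ifs <;> norm_num
    have hej01 : 0 ≤ ej ∧ ej ≤ 1 := by rw [hej]; split_ifs <;> norm_num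
    have hfi01 : 0 ≤ fi ∧ fi ≤ 1 := by rw [hfi]; split_ifs <;> norm_num
    have hfj01 : 0 ≤ fj ∧ fj ≤ 1 := by rw [hfj]; split_ifs <;> norm_num
    have hgi01 : 0 ≤ gi ∧ gi ≤ 1 := by rw [hgi]; split_ifs <;> norm_num
    have hgj01 : 0 ≤ gj ∧ gj ≤ 1 := by rw [hgj]; split_ifs <;> norm_num
    have hfigi : fi ≤ gi := by
      rw [hfi, hgi]; split_ifs with h1 h2 <;> simp_all
    have hfjgj : fj ≤ gj := by
      rw [hfj, hgj]; split_ifs with h1 h2 <;> simp_all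
    -- cast nonnegativity
    have ha0 : 0 ≤ a := by rw [ha]; positivity
    have hb0 : 0 ≤ b := by rw [hb]; positivity
    have hu0 : 0 ≤ u := by rw [hu]; positivity
    have hv0 : 0 ≤ v := by rw [hv]; positivity
    have hci0 : 0 ≤ ci := by rw [hci]; positivity
    have hcj0 : 0 ≤ cj := by rw [hcj]; positivity
    -- subset bounds
    have haci : a ≤ ci := by
      have h : (E.filter fun s => φi s ∧ p s).card ≤ (E.filter φi).card :=
        Multiset.card_le_card (Multiset.monotone_filter_right E (fun s hs => hs.1))
      rw [ha, hci]; exact_mod_cast h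
    have hbcj : b ≤ cj := by
      have h : (E.filter fun s => φj s ∧ p s).card ≤ (E.filter φj).card :=
        Multiset.card_le_card (Multiset.monotone_filter_right E (fun s hs => hs.1))
      rw [hb, hcj]; exact_mod_cast h
    have huci : u ≤ ci := by
      have h : (E.filter fun s => φi s ∧ ¬ p s).card ≤ (E.filter φi).card :=
        Multiset.card_le_card (Multiset.monotone_filter_right E (fun s hs => hs.1))
      rw [hu, hci]; exact_mod_cast h
    have hvcj : v ≤ cj := by
      have h : (E.filter fun s => φj s ∧ ¬ p s).card ≤ (E.filter φj).card :=
        Multiset.card_le_card (Multiset.monotone_filter_right E (fun s hs => hs.1))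
      rw [hv, hcj]; exact_mod_cast h
    have goal := aux_real (a - b) (ei + a - (ej + b)) (min u v) (min (fi + u) (fj + v))
      (max ci cj) (max (gi + ci) (gj + cj))
      (le_min hu0 hv0) (le_trans hci0 (le_max_left _ _))
      (by
        rw [abs_le]
        constructor
        · have : b ≤ max ci cj := hbcj.trans (le_max_right _ _); linarith
        · have : a ≤ max ci cj := haci.trans (le_max_left _ _); linarith)
      (by
        rw [abs_le]
        constructor <;> [skip; skip] <;>
          · obtain ⟨h1, h2⟩ := hei01; obtain ⟨h3, h4⟩ := hej01; linarith)
      (le_min ((min_le_left u v).trans (by linarith [hfi01.1]))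
              ((min_le_right u v).trans (by linarith [hfj01.1])))
      (by
        have : min (fi + u) (fj + v) ≤ min (u + 1) (v + 1) :=
          min_le_min (by linarith [hfi01.2]) (by linarith [hfj01.2])
        rw [min_add_add_right] at this
        linarith)
      (max_le_max (by linarith [hgi01.1]) (by linarith [hgj01.1]))
      (by
        have : max (gi + ci) (gj + cj) ≤ max (ci + 1) (cj + 1) :=
          max_le_max (by linarith [hgi01.2]) (by linarith [hgj01.2])
        rw [max_add_add_right] at this
        linarith)
      ((min_le_left u v).trans (huci.trans (le_max_left _ _)))
      ((min_le_left _ _).trans (le_trans (by linarith : fi + u ≤ gi + ci) (le_max_left _ _)))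
    convert goal using 3
  rcases hneighbor with ⟨t, rfl⟩ | ⟨t, rfl⟩
  · rw [abs_sub_comm]; exact key D t
  · exact key D' t
end

section
/- Fix a type T of tuples, a value function v : T → ℝ and a bound M ≥ 0 with |v(t)| ≤ M for every t : T. Fix predicates φ_i, φ_j, p : T → Prop. For a finite multiset S of elements of T write avg(S) = (Σ_{t ∈ S} v(t)) / |S|, and for a predicate ψ write D_ψ for the submultiset of D of tuples satisfying ψ. Define the AVG-influence I(p; D) = ((avg(D_{φ_i}) − avg(D_{φ_j})) − (avg(D_{φ_i ∧ ¬p}) − avg(D_{φ_j ∧ ¬p}))) · min(|D_{φ_i ∧ ¬p}|, |D_{φ_j ∧ ¬p}|). Then for all neighboring databases D and D' such that each of the four multisets D_{φ_i}, D_{φ_j}, D_{φ_i ∧ ¬p}, D_{φ_j ∧ ¬p} is nonempty in both D and D', |I(p; D) − I(p; D')| ≤ 16M. -/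
open Multiset

section AvgSens
variable {T : Type*} (v : T → ℝ) (M : ℝ)

private noncomputable def mavg (S : Multiset T) : ℝ := (S.map v).sum / (S.card : ℝ)

private lemma sum_abs_le' (hv : ∀ t, |v t| ≤ M) (S : Multiset T) :
    |(S.map v).sum| ≤ (S.card : ℝ) * M := by
  induction S using Multiset.induction with
  | empty => simp
  | cons a s ih =>
    simp only [Multiset.map_cons, Multiset.sum_cons, Multiset.card_cons]
    push_cast
    calc |v a + (s.map v).sum| ≤ |v a| + |(s.map v).sum| := abs_add_le _ _
    _ ≤ M + (s.card : ℝ) * M := add_le_add (hv a) ih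
    _ = ((s.card : ℝ) + 1) * M := by ring

private lemma avg_abs_le' (hv : ∀ t, |v t| ≤ M) (S : Multiset T) (hS : S ≠ 0) :
    |mavg v S| ≤ M := by
  have hc : (0:ℝ) < (S.card : ℝ) := by exact_mod_cast Multiset.card_pos.mpr hS
  rw [mavg, abs_div, abs_of_pos hc, div_le_iff₀ hc]
  calc |(S.map v).sum| ≤ (S.card : ℝ) * M := sum_abs_le' v M hv S
  _ = M * S.card := by ring

private lemma avg_close' (hM : 0 ≤ M) (hv : ∀ t, |v t| ≤ M)
    (S : Multiset T) (hS : S ≠ 0) (t : T) (S' : Multiset T)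
    (hS' : S' = S ∨ S' = t ::ₘ S) (m : ℝ) (hm0 : 0 ≤ m) (hmc : m ≤ (S.card : ℝ)) :
    m * |mavg v S' - mavg v S| ≤ 2 * M := by
  have hc : (0:ℝ) < (S.card : ℝ) := by exact_mod_cast Multiset.card_pos.mpr hS
  rcases hS' with rfl | rfl
  · simp; positivity
  · set c : ℝ := (S.card : ℝ) with hcdef
    set s : ℝ := (S.map v).sum with hsdef
    have key : mavg v (t ::ₘ S) - mavg v S = (c * v t - s) / (c * (c + 1)) := by
      simp only [mavg, Multiset.map_cons, Multiset.sum_cons, Multiset.card_cons]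
      push_cast
      rw [← hcdef]
      field_simp
      ring
    rw [key, abs_div, abs_of_pos (by positivity : (0:ℝ) < c * (c+1))]
    rw [← mul_div_assoc, div_le_iff₀ (by positivity : (0:ℝ) < c*(c+1))]
    have h1 : |c * v t - s| ≤ 2 * M * c := by
      calc |c * v t - s| ≤ |c * v t| + |s| := abs_sub _ _
      _ = c * |v t| + |s| := by rw [abs_mul, abs_of_pos hc]
      _ ≤ c * M + c * M := add_le_add (by nlinarith [hv t]) (sum_abs_le' v M hv S)
      _ = 2 * M * c := by ring
    nlinarith [abs_nonneg (c * v t - s)]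

private lemma filter_cons_cases (ψ : T → Prop) [DecidablePred ψ] (t : T) (D : Multiset T) :
    (t ::ₘ D).filter ψ = D.filter ψ ∨ (t ::ₘ D).filter ψ = t ::ₘ D.filter ψ := by
  by_cases h : ψ t <;> simp [Multiset.filter_cons, h]

private lemma real_step (ai aj bi bj ai' aj' bi' bj' m m' : ℝ)
    (hM : 0 ≤ M)
    (h1 : m * |ai' - ai| ≤ 2*M) (h2 : m * |aj' - aj| ≤ 2*M)
    (h3 : m * |bi' - bi| ≤ 2*M) (h4 : m * |bj' - bj| ≤ 2*M)
    (hm0 : 0 ≤ m) (h6 : m ≤ m') (h5 : m' ≤ m + 1)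
    (hai' : |ai'| ≤ M) (haj' : |aj'| ≤ M) (hbi' : |bi'| ≤ M) (hbj' : |bj'| ≤ M) :
    |((ai' - aj') - (bi' - bj')) * m' - ((ai - aj) - (bi - bj)) * m| ≤ 16 * M := by
  obtain ⟨p1, q1⟩ := abs_le.mp hai'
  obtain ⟨p2, q2⟩ := abs_le.mp haj'
  obtain ⟨p3, q3⟩ := abs_le.mp hbi'
  obtain ⟨p4, q4⟩ := abs_le.mp hbj'
  have hf' : |(ai' - aj') - (bi' - bj')| ≤ 4*M :=
    abs_le.mpr ⟨by linarith, by linarith⟩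
  have hA : |((ai'-ai) - (aj'-aj) - (bi'-bi) + (bj'-bj)) * m| ≤ 8*M := by
    rw [abs_mul, abs_of_nonneg hm0]
    have htri : |(ai'-ai) - (aj'-aj) - (bi'-bi) + (bj'-bj)|
        ≤ |ai'-ai| + |aj'-aj| + |bi'-bi| + |bj'-bj| := by
      have t1 := neg_abs_le (ai'-ai); have t1' := le_abs_self (ai'-ai)
      have t2 := neg_abs_le (aj'-aj); have t2' := le_abs_self (aj'-aj)
      have t3 := neg_abs_le (bi'-bi); have t3' := le_abs_self (bi'-bi)
      have t4 := neg_abs_le (bj'-bj); have t4' := le_abs_self (bj'-bj)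
      exact abs_le.mpr ⟨by linarith, by linarith⟩
    calc |(ai'-ai) - (aj'-aj) - (bi'-bi) + (bj'-bj)| * m
        ≤ (|ai'-ai| + |aj'-aj| + |bi'-bi| + |bj'-bj|) * m :=
          mul_le_mul_of_nonneg_right htri hm0
    _ = m * |ai'-ai| + m * |aj'-aj| + m * |bi'-bi| + m * |bj'-bj| := by ring
    _ ≤ 8*M := by linarith
  have hB : |((ai' - aj') - (bi' - bj')) * (m' - m)| ≤ 4*M := by
    rw [abs_mul]
    have hmm : |m' - m| ≤ 1 := abs_le.mpr ⟨by linarith, by linarith⟩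
    calc |(ai' - aj') - (bi' - bj')| * |m' - m| ≤ (4*M) * 1 :=
      mul_le_mul hf' hmm (abs_nonneg _) (by linarith)
    _ = 4*M := by ring
  have key : ((ai' - aj') - (bi' - bj')) * m' - ((ai - aj) - (bi - bj)) * m
      = ((ai'-ai) - (aj'-aj) - (bi'-bi) + (bj'-bj)) * m
        + ((ai' - aj') - (bi' - bj')) * (m' - m) := by ring
  rw [key]
  calc |_ + _| ≤ |((ai'-ai) - (aj'-aj) - (bi'-bi) + (bj'-bj)) * m|
      + |((ai' - aj') - (bi' - bj')) * (m' - m)| := abs_add_le _ _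
  _ ≤ 8*M + 4*M := add_le_add hA hB
  _ ≤ 16*M := by linarith

private noncomputable def Iexpr (φi φj p : T → Prop) [DecidablePred φi] [DecidablePred φj] [DecidablePred p]
    (D : Multiset T) : ℝ :=
  ((mavg v (D.filter φi) - mavg v (D.filter φj))
    - (mavg v (D.filter fun t => φi t ∧ ¬ p t) - mavg v (D.filter fun t => φj t ∧ ¬ p t)))
  * min ((D.filter fun t => φi t ∧ ¬ p t).card : ℝ) ((D.filter fun t => φj t ∧ ¬ p t).card : ℝ)

private lemma step (hM : 0 ≤ M) (hv : ∀ t, |v t| ≤ M)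
    (φi φj p : T → Prop) [DecidablePred φi] [DecidablePred φj] [DecidablePred p]
    (D : Multiset T) (t : T)
    (hi : D.filter φi ≠ 0) (hj : D.filter φj ≠ 0)
    (hip : D.filter (fun t => φi t ∧ ¬ p t) ≠ 0)
    (hjp : D.filter (fun t => φj t ∧ ¬ p t) ≠ 0) :
    |Iexpr v φi φj p (t ::ₘ D) - Iexpr v φi φj p D| ≤ 16 * M := by
  have hAi := filter_cons_cases (T := T) φi t D
  have hAj := filter_cons_cases (T := T) φj t D
  have hBi := filter_cons_cases (T := T) (fun t => φi t ∧ ¬ p t) t D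
  have hBj := filter_cons_cases (T := T) (fun t => φj t ∧ ¬ p t) t D
  -- nonemptiness of primed filters
  have hi' : (t ::ₘ D).filter φi ≠ 0 := by
    rcases hAi with h | h <;> rw [h]
    · exact hi
    · exact Multiset.cons_ne_zero
  have hj' : (t ::ₘ D).filter φj ≠ 0 := by
    rcases hAj with h | h <;> rw [h]
    · exact hj
    · exact Multiset.cons_ne_zero
  have hip' : (t ::ₘ D).filter (fun t => φi t ∧ ¬ p t) ≠ 0 := by
    rcases hBi with h | h <;> rw [h]
    · exact hip
    · exact Multiset.cons_ne_zero
  have hjp' : (t ::ₘ D).filter (fun t => φj t ∧ ¬ p t) ≠ 0 := by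
    rcases hBj with h | h <;> rw [h]
    · exact hjp
    · exact Multiset.cons_ne_zero
  -- card facts
  have hBiAi : ((D.filter fun t => φi t ∧ ¬ p t).card : ℝ) ≤ ((D.filter φi).card : ℝ) := by
    exact_mod_cast Multiset.card_le_card
      (Multiset.monotone_filter_right (p := fun t => φi t ∧ ¬ p t) (q := φi) D
        (fun b hb => hb.1))
  have hBjAj : ((D.filter fun t => φj t ∧ ¬ p t).card : ℝ) ≤ ((D.filter φj).card : ℝ) := by
    exact_mod_cast Multiset.card_le_card
      (Multiset.monotone_filter_right (p := fun t => φj t ∧ ¬ p t) (q := φj) D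
        (fun b hb => hb.1))
  set ci : ℝ := ((D.filter fun t => φi t ∧ ¬ p t).card : ℝ) with hci
  set cj : ℝ := ((D.filter fun t => φj t ∧ ¬ p t).card : ℝ) with hcj
  set ci' : ℝ := (((t ::ₘ D).filter fun t => φi t ∧ ¬ p t).card : ℝ) with hci'
  set cj' : ℝ := (((t ::ₘ D).filter fun t => φj t ∧ ¬ p t).card : ℝ) with hcj'
  have hcibound : ci ≤ ci' ∧ ci' ≤ ci + 1 := by
    rcases hBi with h | h <;> rw [hci', h]
    · exact ⟨le_refl _, by linarith⟩
    · rw [Multiset.card_cons]; push_cast; exact ⟨by linarith, by linarith⟩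
  have hcjbound : cj ≤ cj' ∧ cj' ≤ cj + 1 := by
    rcases hBj with h | h <;> rw [hcj', h]
    · exact ⟨le_refl _, by linarith⟩
    · rw [Multiset.card_cons]; push_cast; exact ⟨by linarith, by linarith⟩
  set m : ℝ := min ci cj with hm
  set m' : ℝ := min ci' cj' with hm'
  have hm0 : 0 ≤ m := le_min (by positivity) (by positivity)
  have hmm' : m ≤ m' := min_le_min hcibound.1 hcjbound.1
  have hm'1 : m' ≤ m + 1 := by
    calc m' ≤ min (ci + 1) (cj + 1) := min_le_min hcibound.2 hcjbound.2
    _ = m + 1 := (min_add_add_right ci cj 1)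
  -- avg closeness
  have h1 := avg_close' v M hM hv (D.filter φi) hi t _ hAi m hm0
    (le_trans (min_le_left _ _) hBiAi)
  have h2 := avg_close' v M hM hv (D.filter φj) hj t _ hAj m hm0
    (le_trans (min_le_right _ _) hBjAj)
  have h3 := avg_close' v M hM hv (D.filter fun t => φi t ∧ ¬ p t) hip t _ hBi m hm0
    (min_le_left _ _)
  have h4 := avg_close' v M hM hv (D.filter fun t => φj t ∧ ¬ p t) hjp t _ hBj m hm0
    (min_le_right _ _)
  -- avg bounds on primed
  have e1 := avg_abs_le' v M hv _ hi'
  have e2 := avg_abs_le' v M hv _ hj'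
  have e3 := avg_abs_le' v M hv _ hip'
  have e4 := avg_abs_le' v M hv _ hjp'
  rw [Iexpr, Iexpr]
  exact real_step M _ _ _ _ _ _ _ _ m m' hM h1 h2 h3 h4 hm0 hmm' hm'1 e1 e2 e3 e4

end AvgSens

/-- Sensitivity of the AVG influence function: for neighboring databases `D, D'` on which the
four relevant groups are all nonempty, `|I(p; D) − I(p; D')| ≤ 16M`. -/
theorem avg_influence_sensitivity {T : Type*}
    (v : T → ℝ) (M : ℝ) (hM : 0 ≤ M) (hv : ∀ t : T, |v t| ≤ M)
    (φi φj p : T → Prop) [DecidablePred φi] [DecidablePred φj] [DecidablePred p]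
    (I : Multiset T → ℝ)
    (hI : ∀ D : Multiset T,
      I D = ((((D.filter φi).map v).sum / ((D.filter φi).card : ℝ)
                - ((D.filter φj).map v).sum / ((D.filter φj).card : ℝ))
             - (((D.filter fun t => φi t ∧ ¬ p t).map v).sum
                    / ((D.filter fun t => φi t ∧ ¬ p t).card : ℝ)
                - ((D.filter fun t => φj t ∧ ¬ p t).map v).sum
                    / ((D.filter fun t => φj t ∧ ¬ p t).card : ℝ)))
            * min ((D.filter fun t => φi t ∧ ¬ p t).card : ℝ)
                  ((D.filter fun t => φj t ∧ ¬ p t).card : ℝ))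
    (D D' : Multiset T)
    (hneighbor : (∃ t, D' = t ::ₘ D) ∨ (∃ t, D = t ::ₘ D'))
    (hi : D.filter φi ≠ 0) (hj : D.filter φj ≠ 0)
    (hip : D.filter (fun t => φi t ∧ ¬ p t) ≠ 0)
    (hjp : D.filter (fun t => φj t ∧ ¬ p t) ≠ 0)
    (hi' : D'.filter φi ≠ 0) (hj' : D'.filter φj ≠ 0)
    (hip' : D'.filter (fun t => φi t ∧ ¬ p t) ≠ 0)
    (hjp' : D'.filter (fun t => φj t ∧ ¬ p t) ≠ 0) :
    |I D - I D'| ≤ 16 * M := by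
  have hIe : ∀ E : Multiset T, I E = Iexpr v φi φj p E := by
    intro E; rw [hI E]; rfl
  rcases hneighbor with ⟨t, rfl⟩ | ⟨t, rfl⟩
  · rw [hIe, hIe, abs_sub_comm]
    exact step v M hM hv φi φj p D t hi hj hip hjp
  · rw [hIe, hIe]
    exact step v M hM hv φi φj p D' t hi' hj' hip' hjp'
end

section
/- Let P be a nonempty finite set, let u : P → ℝ, let s > 0 and t ≥ 0 be real numbers, and let c = (max_{x ∈ P} u(x)) − s·(ln |P| + t). Then Σ_{x ∈ P, u(x) ≤ c} exp(u(x)/s) ≤ exp(−t) · Σ_{x ∈ P} exp(u(x)/s). In particular, if an element of P is sampled with probability proportional to exp(u(x)/s), the probability that its score u is at most max u − s(ln |P| + t) is at most e^{−t}. -/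
/-- Utility bound for the exponential mechanism: with `c = max_{x ∈ P} u(x) − s(ln |P| + t)`,
the total (unnormalized) weight of the candidates scoring at most `c` is at most `e^{−t}`
times the total weight, so the probability of sampling a score at most `c` is at most
`e^{−t}`. -/
theorem exponential_mechanism_utility {α : Type*} [DecidableEq α]
    (P : Finset α) (hP : P.Nonempty) (u : α → ℝ) (s t : ℝ) (hs : 0 < s) (ht : 0 ≤ t) :
    ∑ x ∈ P.filter (fun x => u x ≤ P.sup' hP u - s * (Real.log P.card + t)),
        Real.exp (u x / s)
      ≤ Real.exp (-t) * ∑ x ∈ P, Real.exp (u x / s) := by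
  set M := P.sup' hP u with hM
  have hn : (0:ℝ) < P.card := by exact_mod_cast Finset.card_pos.mpr hP
  -- each term in the filtered sum is at most exp(M/s) * exp(-t) / card
  have hbound : ∀ x ∈ P.filter (fun x => u x ≤ M - s * (Real.log P.card + t)),
      Real.exp (u x / s) ≤ Real.exp (M / s) * Real.exp (-t) / P.card := by
    intro x hx
    rw [Finset.mem_filter] at hx
    have h1 : u x / s ≤ M / s - (Real.log P.card + t) := by
      rw [div_le_iff₀ hs, sub_mul, div_mul_cancel₀ _ hs.ne']
      linarith [hx.2]
    calc Real.exp (u x / s) ≤ Real.exp (M / s - (Real.log P.card + t)) :=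
          Real.exp_le_exp.mpr h1
      _ = Real.exp (M / s) * Real.exp (-t) / P.card := by
          rw [Real.exp_sub, Real.exp_add, Real.exp_log hn, Real.exp_neg]
          ring
  have hLHS : ∑ x ∈ P.filter (fun x => u x ≤ M - s * (Real.log P.card + t)),
      Real.exp (u x / s) ≤ Real.exp (M / s) * Real.exp (-t) := by
    calc _ ≤ ∑ _x ∈ P.filter (fun x => u x ≤ M - s * (Real.log P.card + t)),
          (Real.exp (M / s) * Real.exp (-t) / P.card) := Finset.sum_le_sum hbound
      _ = (P.filter (fun x => u x ≤ M - s * (Real.log P.card + t))).card *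
          (Real.exp (M / s) * Real.exp (-t) / P.card) := by
          rw [Finset.sum_const, nsmul_eq_mul]
      _ ≤ P.card * (Real.exp (M / s) * Real.exp (-t) / P.card) := by
          apply mul_le_mul_of_nonneg_right
          · exact_mod_cast Finset.card_filter_le _ _
          · positivity
      _ = Real.exp (M / s) * Real.exp (-t) := by field_simp
  -- the full sum is at least exp(M/s)
  obtain ⟨x₀, hx₀, hx₀M⟩ := P.exists_mem_eq_sup' hP u
  have hRHS : Real.exp (M / s) ≤ ∑ x ∈ P, Real.exp (u x / s) := by
    calc Real.exp (M / s) = Real.exp (u x₀ / s) := by rw [hM, hx₀M]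
      _ ≤ _ := Finset.single_le_sum (f := fun x => Real.exp (u x / s))
        (fun i _ => (Real.exp_pos _).le) hx₀
  calc _ ≤ Real.exp (M / s) * Real.exp (-t) := hLHS
    _ ≤ (∑ x ∈ P, Real.exp (u x / s)) * Real.exp (-t) :=
        mul_le_mul_of_nonneg_right hRHS (Real.exp_pos _).le
    _ = Real.exp (-t) * ∑ x ∈ P, Real.exp (u x / s) := mul_comm _ _
end

section
/- Fix a type T. For finite multisets D, D'' of elements of T, let d(D'', D) = |D'' − D| + |D − D''| be the symmetric-difference distance, where the differences are multiset differences and |·| is cardinality. Let 𝒫 be a finite set, let I : 𝒫 → Multiset T → ℝ be an arbitrary influence function, fix p ∈ 𝒫, and for d ∈ ℕ define B(p, d; D) = |𝒫| − |{ p̃ ∈ 𝒫 : ∀ D'' with d(D'', D) ≤ d, I(p̃)(D'') < I(p)(D'') }|. Then for all multisets D, D' with d(D, D') ≤ 1 and all d ∈ ℕ, B(p, d; D) ≤ B(p, d + 1; D'). -/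
open Classical

lemma multiset_sub_triangle {T : Type*} (A B C : Multiset T) :
    A - C ≤ (A - B) + (B - C) := by
  classical
  rw [Multiset.le_iff_count]
  intro a
  simp only [Multiset.count_sub, Multiset.count_add]
  omega

/-- Monotonicity of the distance-`d` rank bound `B`: for databases `D, D'` at
symmetric-difference distance at most 1, `B(p, d; D) ≤ B(p, d + 1; D')`. -/
theorem rank_bound_monotone {T α : Type*} [Fintype α]
    (I : α → Multiset T → ℝ) (p : α)
    (B : ℕ → Multiset T → ℕ)
    (hB : ∀ (d : ℕ) (D : Multiset T),
      B d D = Fintype.card α -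
        (Finset.univ.filter fun q : α =>
          ∀ D'' : Multiset T, (D'' - D).card + (D - D'').card ≤ d → I q D'' < I p D'').card)
    (D D' : Multiset T)
    (hdist : (D - D').card + (D' - D).card ≤ 1)
    (d : ℕ) :
    B d D ≤ B (d + 1) D' := by
  rw [hB, hB]
  apply Nat.sub_le_sub_left
  apply Finset.card_le_card
  intro q hq
  simp only [Finset.mem_filter, Finset.mem_univ, true_and] at hq ⊢
  intro D'' hD''
  apply hq
  have h1 : (D'' - D').card ≤ (D'' - D).card + (D - D').card := by
    calc (D'' - D').card ≤ ((D'' - D) + (D - D')).card :=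
          Multiset.card_le_card (multiset_sub_triangle _ _ _)
      _ = (D'' - D).card + (D - D').card := Multiset.card_add _ _
  have h2 : (D' - D'').card ≤ (D' - D).card + (D - D'').card := by
    calc (D' - D'').card ≤ ((D' - D) + (D - D'')).card :=
          Multiset.card_le_card (multiset_sub_triangle _ _ _)
      _ = (D' - D).card + (D - D'').card := Multiset.card_add _ _
  omega
end

section
/- Fix a type T of tuples, a natural number m ≥ 1, predicates φ_1, …, φ_m, p : T → Prop, and real weights w_1, …, w_m. For a finite multiset D of elements of T write c(ψ, D) for the number of tuples in D satisfying ψ, counted with multiplicity. Define the weighted COUNT-influence I(p; D) = (Σ_{j=1}^{m} w_j · c(φ_j ∧ p, D)) · min_{1 ≤ j ≤ m} c(φ_j ∧ ¬p, D) / (max_{1 ≤ j ≤ m} c(φ_j, D) + 1), computed over the real numbers. Then for all neighboring databases D and D', |I(p; D) − I(p; D')| ≤ 2·Σ_{j=1}^{m} |w_j|. -/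
lemma wcis_key (A A' N N' S S' W : ℝ)
    (h1 : |A' - A| ≤ W) (h2 : |A| ≤ W * S)
    (hN0 : 0 ≤ N) (hNN : N ≤ N') (hN1 : N' ≤ N + 1)
    (hS0 : 0 ≤ S) (hSS : S ≤ S') (hS1 : S' ≤ S + 1)
    (hNS : N ≤ S) (hNS' : N' ≤ S') :
    |A' * N' / (S' + 1) - A * N / (S + 1)| ≤ 2 * W := by
  have hW : 0 ≤ W := le_trans (abs_nonneg _) h1
  have hM : (0:ℝ) < S + 1 := by linarith
  have hM' : (0:ℝ) < S' + 1 := by linarith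
  have heq : A' * N' / (S' + 1) - A * N / (S + 1)
      = ((A' - A) * N' * (S + 1) + A * (N' * (S + 1) - N * (S' + 1)))
        / ((S + 1) * (S' + 1)) := by
    field_simp; ring
  rw [heq, abs_div, abs_of_pos (mul_pos hM hM'), div_le_iff₀ (mul_pos hM hM')]
  have h3 : |N' * (S + 1) - N * (S' + 1)| ≤ S + 1 := by
    rw [abs_le]; constructor <;> nlinarith
  have h4 : |(A' - A) * N' * (S + 1)| ≤ W * (S' + 1) * (S + 1) := by
    rw [abs_mul, abs_mul, abs_of_nonneg (by linarith : (0:ℝ) ≤ N'),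
      abs_of_pos hM]
    have : |A' - A| * N' ≤ W * (S' + 1) :=
      mul_le_mul h1 (by linarith) (by linarith) hW
    exact mul_le_mul_of_nonneg_right this hM.le
  have h5 : |A * (N' * (S + 1) - N * (S' + 1))| ≤ (W * S) * (S + 1) := by
    rw [abs_mul]
    exact mul_le_mul h2 h3 (abs_nonneg _) (by positivity)
  calc |(A' - A) * N' * (S + 1) + A * (N' * (S + 1) - N * (S' + 1))|
      ≤ |(A' - A) * N' * (S + 1)| + |A * (N' * (S + 1) - N * (S' + 1))| :=
        abs_add_le _ _
    _ ≤ W * (S' + 1) * (S + 1) + (W * S) * (S + 1) := add_le_add h4 h5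
    _ ≤ 2 * W * ((S + 1) * (S' + 1)) := by
        nlinarith [mul_nonneg (mul_nonneg hW hM.le)
          (show (0:ℝ) ≤ S' + 1 - S by linarith)]

lemma wcis_card_filter_cons {T : Type*} (q : T → Prop) [DecidablePred q]
    (t : T) (E : Multiset T) :
    ((t ::ₘ E).filter q).card = (E.filter q).card + (if q t then 1 else 0) := by
  rw [Multiset.filter_cons]
  split <;> simp [add_comm]

/-- Sensitivity of the weighted COUNT influence function for general user questions:
for neighboring databases `D, D'`, `|I(p; D) − I(p; D')| ≤ 2 Σ_j |w_j|`. -/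
theorem weighted_count_influence_sensitivity {T : Type*}
    (m : ℕ) (hm : 1 ≤ m)
    (φ : Fin m → T → Prop) (p : T → Prop)
    [∀ j, DecidablePred (φ j)] [DecidablePred p]
    (w : Fin m → ℝ)
    (I : Multiset T → ℝ)
    (hI : ∀ D : Multiset T,
      I D = (∑ j, w j * ((D.filter fun t => φ j t ∧ p t).card : ℝ))
            * (Finset.univ.inf' (Finset.univ_nonempty_iff.mpr ⟨⟨0, hm⟩⟩)
                fun j : Fin m => ((D.filter fun t => φ j t ∧ ¬ p t).card : ℝ))
            / ((Finset.univ.sup' (Finset.univ_nonempty_iff.mpr ⟨⟨0, hm⟩⟩)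
                fun j : Fin m => ((D.filter (φ j)).card : ℝ)) + 1))
    (D D' : Multiset T)
    (hneighbor : (∃ t, D' = t ::ₘ D) ∨ (∃ t, D = t ::ₘ D')) :
    |I D - I D'| ≤ 2 * ∑ j, |w j| := by
  have hne : (Finset.univ : Finset (Fin m)).Nonempty :=
    Finset.univ_nonempty_iff.mpr ⟨⟨0, hm⟩⟩
  suffices h : ∀ (t : T) (E : Multiset T), |I (t ::ₘ E) - I E| ≤ 2 * ∑ j, |w j| by
    rcases hneighbor with ⟨t, rfl⟩ | ⟨t, rfl⟩
    · rw [abs_sub_comm]; exact h t D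
    · exact h t D'
  intro t E
  rw [hI, hI]
  -- real-valued counts
  set c : Fin m → ℝ := fun j => ((E.filter fun x => φ j x ∧ p x).card : ℝ) with hc
  set c' : Fin m → ℝ := fun j => (((t ::ₘ E).filter fun x => φ j x ∧ p x).card : ℝ) with hc'
  set n : Fin m → ℝ := fun j => ((E.filter fun x => φ j x ∧ ¬ p x).card : ℝ) with hn
  set n' : Fin m → ℝ := fun j => (((t ::ₘ E).filter fun x => φ j x ∧ ¬ p x).card : ℝ) with hn'
  set g : Fin m → ℝ := fun j => ((E.filter (φ j)).card : ℝ) with hg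
  set g' : Fin m → ℝ := fun j => (((t ::ₘ E).filter (φ j)).card : ℝ) with hg'
  have hcc : ∀ j, c j ≤ c' j ∧ c' j ≤ c j + 1 := by
    intro j; simp only [hc, hc', wcis_card_filter_cons]
    constructor <;> push_cast <;> split <;> simp
  have hnn : ∀ j, n j ≤ n' j ∧ n' j ≤ n j + 1 := by
    intro j; simp only [hn, hn', wcis_card_filter_cons]
    constructor <;> push_cast <;> split <;> simp
  have hgg : ∀ j, g j ≤ g' j ∧ g' j ≤ g j + 1 := by
    intro j; simp only [hg, hg', wcis_card_filter_cons]
    constructor <;> push_cast <;> split <;> simp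
  have hcg : ∀ j, c j ≤ g j := by
    intro j
    have hle : (E.filter fun x => φ j x ∧ p x) ≤ E.filter (φ j) :=
      Multiset.monotone_filter_right E
        (fun x (hx : φ j x ∧ p x) => hx.1)
    simp only [hc, hg]
    exact_mod_cast Multiset.card_le_card hle
  have hng : ∀ j, n j ≤ g j := by
    intro j
    have hle : (E.filter fun x => φ j x ∧ ¬ p x) ≤ E.filter (φ j) :=
      Multiset.monotone_filter_right E
        (fun x (hx : φ j x ∧ ¬ p x) => hx.1)
    simp only [hn, hg]
    exact_mod_cast Multiset.card_le_card hle
  have hng' : ∀ j, n' j ≤ g' j := by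
    intro j
    have hle : ((t ::ₘ E).filter fun x => φ j x ∧ ¬ p x) ≤ (t ::ₘ E).filter (φ j) :=
      Multiset.monotone_filter_right (t ::ₘ E)
        (fun x (hx : φ j x ∧ ¬ p x) => hx.1)
    simp only [hn', hg']
    exact_mod_cast Multiset.card_le_card hle
  set N := Finset.univ.inf' hne n with hN
  set N' := Finset.univ.inf' hne n' with hN'
  set S := Finset.univ.sup' hne g with hS
  set S' := Finset.univ.sup' hne g' with hS'
  set A := ∑ j, w j * c j with hA
  set A' := ∑ j, w j * c' j with hA'
  have goal_eq : |A' * N' / (S' + 1) - A * N / (S + 1)| ≤ 2 * ∑ j, |w j| → True := fun _ => trivial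
  apply wcis_key A A' N N' S S' (∑ j, |w j|)
  · -- |A' - A| ≤ ∑ |w j|
    have : A' - A = ∑ j, w j * (c' j - c j) := by
      rw [hA, hA', ← Finset.sum_sub_distrib]
      exact Finset.sum_congr rfl fun j _ => by ring
    rw [this]
    calc |∑ j, w j * (c' j - c j)| ≤ ∑ j, |w j * (c' j - c j)| :=
          Finset.abs_sum_le_sum_abs _ _
      _ ≤ ∑ j, |w j| := by
          apply Finset.sum_le_sum
          intro j _
          rw [abs_mul]
          have h1 := (hcc j).1
          have h2 := (hcc j).2
          have : |c' j - c j| ≤ 1 := by rw [abs_le]; constructor <;> linarith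
          calc |w j| * |c' j - c j| ≤ |w j| * 1 :=
                mul_le_mul_of_nonneg_left this (abs_nonneg _)
            _ = |w j| := mul_one _
  · -- |A| ≤ (∑ |w j|) * S
    rw [Finset.sum_mul]
    calc |A| ≤ ∑ j, |w j * c j| := Finset.abs_sum_le_sum_abs _ _
      _ ≤ ∑ j, |w j| * S := by
          apply Finset.sum_le_sum
          intro j _
          rw [abs_mul]
          have hc0 : (0:ℝ) ≤ c j := by simp [hc]
          have : c j ≤ S :=
            le_trans (hcg j) (Finset.le_sup' g (Finset.mem_univ j))
          rw [abs_of_nonneg hc0]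
          exact mul_le_mul_of_nonneg_left this (abs_nonneg _)
  · -- 0 ≤ N
    apply Finset.le_inf' hne
    intro j _; simp [hn]
  · -- N ≤ N'
    apply Finset.le_inf' hne
    intro j _
    exact le_trans (Finset.inf'_le n (Finset.mem_univ j)) (hnn j).1
  · -- N' ≤ N + 1
    obtain ⟨j0, _, hj0⟩ := Finset.exists_mem_eq_inf' hne n
    calc N' ≤ n' j0 := Finset.inf'_le n' (Finset.mem_univ j0)
      _ ≤ n j0 + 1 := (hnn j0).2
      _ = N + 1 := by rw [hN, hj0]
  · -- 0 ≤ S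
    have : (0:ℝ) ≤ g ⟨0, hm⟩ := by simp [hg]
    exact le_trans this (Finset.le_sup' g (Finset.mem_univ _))
  · -- S ≤ S'
    apply Finset.sup'_le hne
    intro j _
    exact le_trans (hgg j).1 (Finset.le_sup' g' (Finset.mem_univ j))
  · -- S' ≤ S + 1
    apply Finset.sup'_le hne
    intro j _
    exact le_trans (hgg j).2
      (by linarith [Finset.le_sup' g (Finset.mem_univ j)])
  · -- N ≤ S
    calc N ≤ n ⟨0, hm⟩ := Finset.inf'_le n (Finset.mem_univ _)
      _ ≤ g ⟨0, hm⟩ := hng _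
      _ ≤ S := Finset.le_sup' g (Finset.mem_univ _)
  · -- N' ≤ S'
    calc N' ≤ n' ⟨0, hm⟩ := Finset.inf'_le n' (Finset.mem_univ _)
      _ ≤ g' ⟨0, hm⟩ := hng' _
      _ ≤ S' := Finset.le_sup' g' (Finset.mem_univ _)
end

section
/- Fix a type T of tuples, a value function v : T → ℝ and a bound M ≥ 0 with |v(t)| ≤ M for every t : T. Fix a natural number m ≥ 1, predicates φ_1, …, φ_m, p : T → Prop, and real weights w_1, …, w_m. For a finite multiset D of elements of T write s(ψ, D) = Σ_{t ∈ D, ψ(t)} v(t) (summed with multiplicity) and c(ψ, D) for the number of tuples in D satisfying ψ. Define the weighted SUM-influence I(p; D) = (Σ_{j=1}^{m} w_j · s(φ_j ∧ p, D)) · min_{1 ≤ j ≤ m} c(φ_j ∧ ¬p, D) / (max_{1 ≤ j ≤ m} c(φ_j, D) + 1), computed over the real numbers. Then for all neighboring databases D and D', |I(p; D) − I(p; D')| ≤ 2·M·Σ_{j=1}^{m} |w_j|. -/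
/-!
Write `I = S · N / (A + 1)` with `S` the weighted group sum, `N` the minimal complement count
and `A` the maximal group count, and let `D' = t ::ₘ D`. Adding `t` moves `S` by at most
`M Σ |w_j|` and raises every count, hence `N` and `A`, by `0` or `1`. Since `N ≤ A`, the ratio
`r = N / (A + 1)` lies in `[0, 1]` and moves by at most `1 / (A' + 1)`, while `|S| ≤ M Σ |w_j| · A`.
Hence both terms of `I' - I = (S' - S) r' + S (r' - r)` are at most `M Σ |w_j|`.
-/

open Finset

theorem abs_div_add_one_sub_div_add_one_le {n n' a a' : ℝ} (hn : 0 ≤ n) (hnn' : n ≤ n')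
    (hn'n : n' ≤ n + 1) (hna : n ≤ a) (haa' : a ≤ a') (ha'a : a' ≤ a + 1) :
    |n' / (a' + 1) - n / (a + 1)| ≤ 1 / (a' + 1) := by
  have ha : 0 < a + 1 := by linarith
  have ha' : 0 < a' + 1 := by linarith
  calc |n' / (a' + 1) - n / (a + 1)|
      = |n' * (a + 1) - (a' + 1) * n| / ((a' + 1) * (a + 1)) := by
        rw [div_sub_div _ _ ha'.ne' ha.ne', abs_div, abs_of_pos (mul_pos ha' ha)]
    _ ≤ (a + 1) / ((a' + 1) * (a + 1)) := by
        gcongr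
        rw [abs_le]
        constructor <;> nlinarith
    _ = 1 / (a' + 1) := by field_simp

theorem abs_mul_div_sub_mul_div_le {s s' n n' a a' K : ℝ} (hs : |s| ≤ K * a)
    (hds : |s' - s| ≤ K) (hn : 0 ≤ n) (hnn' : n ≤ n') (hn'n : n' ≤ n + 1) (hna : n ≤ a)
    (haa' : a ≤ a') (ha'a : a' ≤ a + 1) :
    |s' * n' / (a' + 1) - s * n / (a + 1)| ≤ 2 * K := by
  have hK : 0 ≤ K := (abs_nonneg _).trans hds
  have ha' : 0 < a' + 1 := by linarith
  have hr'₀ : 0 ≤ n' / (a' + 1) := div_nonneg (by linarith) ha'.le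
  have hr'₁ : n' / (a' + 1) ≤ 1 := (div_le_one ha').2 (by linarith)
  calc |s' * n' / (a' + 1) - s * n / (a + 1)|
      = |(s' - s) * (n' / (a' + 1)) + s * (n' / (a' + 1) - n / (a + 1))| := by ring_nf
    _ ≤ |s' - s| * (n' / (a' + 1)) + |s| * |n' / (a' + 1) - n / (a + 1)| := by
      grw [abs_add_le, abs_mul, abs_mul, abs_of_nonneg hr'₀]
    _ ≤ K * 1 + K * a * (1 / (a' + 1)) :=
      add_le_add (mul_le_mul hds hr'₁ hr'₀ hK) (mul_le_mul hs
        (abs_div_add_one_sub_div_add_one_le hn hnn' hn'n hna haa' ha'a) (abs_nonneg _)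
        (mul_nonneg hK (hn.trans hna)))
    _ ≤ 2 * K := by
      have : a * (1 / (a' + 1)) ≤ 1 := by rw [mul_one_div, div_le_one ha']; linarith
      nlinarith

namespace Finset

variable {ι α : Type*} [AddCommMonoid α] [LinearOrder α] {s : Finset ι} (H : s.Nonempty)
  {f g : ι → α} {c : α}

theorem inf'_le_inf'_add_of_le_add (h : ∀ i ∈ s, g i ≤ f i + c) :
    s.inf' H g ≤ s.inf' H f + c := by
  obtain ⟨i, hi, hfi⟩ := s.exists_mem_eq_inf' H f
  rw [hfi]
  exact (inf'_le g hi).trans (h i hi)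

theorem sup'_le_sup'_add_of_le_add [IsOrderedAddMonoid α] (h : ∀ i ∈ s, g i ≤ f i + c) :
    s.sup' H g ≤ s.sup' H f + c :=
  sup'_le H g fun i hi => (h i hi).trans (add_le_add_left (le_sup' f hi) c)

end Finset

namespace Multiset

variable {α : Type*}

theorem abs_sum_map_le_card_mul {v : α → ℝ} {M : ℝ} (s : Multiset α)
    (hv : ∀ x ∈ s, |v x| ≤ M) : |(s.map v).sum| ≤ s.card * M :=
  calc |(s.map v).sum| ≤ ((s.map v).map abs).sum := abs_sum_le_sum_abs
    _ ≤ card ((s.map v).map abs) • M := sum_le_card_nsmul _ _ (by simpa using hv)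
    _ = s.card * M := by simp

variable (q : α → Prop) [DecidablePred q] (a : α) (s : Multiset α)

theorem card_filter_le_card_filter_cons : card (s.filter q) ≤ card ((a ::ₘ s).filter q) :=
  card_le_card (filter_le_filter q (le_cons_self s a))

theorem card_filter_cons_le_add_one : card ((a ::ₘ s).filter q) ≤ card (s.filter q) + 1 := by
  rw [← countP_eq_card_filter, ← countP_eq_card_filter, countP_cons]
  split <;> simp

theorem sum_map_filter_cons {β : Type*} [AddCommMonoid β] (v : α → β) :
    (((a ::ₘ s).filter q).map v).sum = (if q a then v a else 0) + ((s.filter q).map v).sum := by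
  rw [filter_cons, map_add, sum_add]
  split <;> simp

end Multiset

section WeightedGroupSum

variable {T ι : Type*} [Fintype ι] (v : T → ℝ) (w : ι → ℝ) (φ : ι → T → Prop)
  (p : T → Prop) [∀ j, DecidablePred (φ j)] [DecidablePred p]

def weightedGroupSum (D : Multiset T) : ℝ :=
  ∑ j, w j * ((D.filter fun t => φ j t ∧ p t).map v).sum

variable {v w φ p} {M : ℝ}

theorem abs_weightedGroupSum_cons_sub_le (hv : ∀ t, |v t| ≤ M) (t : T) (D : Multiset T) :
    |weightedGroupSum v w φ p (t ::ₘ D) - weightedGroupSum v w φ p D| ≤ M * ∑ j, |w j| := by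
  have hdiff : weightedGroupSum v w φ p (t ::ₘ D) - weightedGroupSum v w φ p D =
      ∑ j, w j * (if φ j t ∧ p t then v t else 0) := by
    simp only [weightedGroupSum, Multiset.sum_map_filter_cons, mul_add, sum_add_distrib,
      add_sub_cancel_right]
  calc |weightedGroupSum v w φ p (t ::ₘ D) - weightedGroupSum v w φ p D|
      ≤ ∑ j, |w j| * |if φ j t ∧ p t then v t else 0| := by
        grw [hdiff, abs_sum_le_sum_abs]
        simp only [abs_mul, le_refl]
    _ ≤ ∑ j, |w j| * M := sum_le_sum fun j _ => by
        gcongr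
        split
        · exact hv t
        · exact abs_zero.trans_le ((abs_nonneg _).trans (hv t))
    _ = M * ∑ j, |w j| := by rw [← sum_mul, mul_comm]

end WeightedGroupSum

section SumInfluence

variable {T ι : Type*} [Fintype ι] [Nonempty ι] (v : T → ℝ) (w : ι → ℝ) (φ : ι → T → Prop)
  (p : T → Prop) [∀ j, DecidablePred (φ j)] [DecidablePred p]

def minComplementCount (D : Multiset T) : ℝ :=
  univ.inf' univ_nonempty fun j => ((D.filter fun t => φ j t ∧ ¬ p t).card : ℝ)

def maxGroupCount (D : Multiset T) : ℝ :=
  univ.sup' univ_nonempty fun j => ((D.filter (φ j)).card : ℝ)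

/-- The weighted SUM influence `I(p; D)`. -/
noncomputable def sumInfluence (D : Multiset T) : ℝ :=
  weightedGroupSum v w φ p D * minComplementCount φ p D / (maxGroupCount φ D + 1)

variable {v w φ p} (t : T) (D : Multiset T)

theorem minComplementCount_nonneg : 0 ≤ minComplementCount φ p D :=
  le_inf' _ _ fun _ _ => Nat.cast_nonneg _

theorem card_filter_and_le_maxGroupCount (j : ι) (q : T → Prop) [DecidablePred q] :
    ((D.filter fun t => φ j t ∧ q t).card : ℝ) ≤ maxGroupCount φ D :=
  calc ((D.filter fun t => φ j t ∧ q t).card : ℝ) ≤ ((D.filter (φ j)).card : ℝ) := by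
        exact_mod_cast Multiset.card_le_card (D.monotone_filter_right fun _ h => And.left h)
    _ ≤ maxGroupCount φ D := le_sup' (fun j => ((D.filter (φ j)).card : ℝ)) (mem_univ j)

theorem minComplementCount_le_maxGroupCount : minComplementCount φ p D ≤ maxGroupCount φ D :=
  (inf'_le _ (mem_univ (Classical.arbitrary ι))).trans (card_filter_and_le_maxGroupCount D _ _)

theorem minComplementCount_le_cons : minComplementCount φ p D ≤ minComplementCount φ p (t ::ₘ D) :=
  inf'_mono_fun fun _ _ => by exact_mod_cast Multiset.card_filter_le_card_filter_cons _ t D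

theorem minComplementCount_cons_le_add_one :
    minComplementCount φ p (t ::ₘ D) ≤ minComplementCount φ p D + 1 :=
  inf'_le_inf'_add_of_le_add _ fun _ _ => by
    exact_mod_cast Multiset.card_filter_cons_le_add_one _ t D

theorem maxGroupCount_le_cons : maxGroupCount φ D ≤ maxGroupCount φ (t ::ₘ D) :=
  sup'_mono_fun fun _ _ => by exact_mod_cast Multiset.card_filter_le_card_filter_cons _ t D

theorem maxGroupCount_cons_le_add_one : maxGroupCount φ (t ::ₘ D) ≤ maxGroupCount φ D + 1 :=
  sup'_le_sup'_add_of_le_add _ fun _ _ => by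
    exact_mod_cast Multiset.card_filter_cons_le_add_one _ t D

theorem abs_weightedGroupSum_le {M : ℝ} (hM : 0 ≤ M) (hv : ∀ t, |v t| ≤ M) :
    |weightedGroupSum v w φ p D| ≤ M * (∑ j, |w j|) * maxGroupCount φ D :=
  calc |weightedGroupSum v w φ p D|
      ≤ ∑ j, |w j| * |((D.filter fun t => φ j t ∧ p t).map v).sum| := by
        grw [weightedGroupSum, abs_sum_le_sum_abs]
        simp only [abs_mul, le_refl]
    _ ≤ ∑ j, |w j| * (maxGroupCount φ D * M) := sum_le_sum fun j _ => by
        grw [Multiset.abs_sum_map_le_card_mul _ fun x _ => hv x,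
          card_filter_and_le_maxGroupCount D j p]
    _ = M * (∑ j, |w j|) * maxGroupCount φ D := by rw [← sum_mul]; ring

theorem abs_sumInfluence_cons_sub_le {M : ℝ} (hv : ∀ t, |v t| ≤ M) :
    |sumInfluence v w φ p (t ::ₘ D) - sumInfluence v w φ p D| ≤ 2 * M * ∑ j, |w j| := by
  rw [mul_assoc]
  exact abs_mul_div_sub_mul_div_le
    (abs_weightedGroupSum_le D ((abs_nonneg _).trans (hv t)) hv)
    (abs_weightedGroupSum_cons_sub_le hv t D) (minComplementCount_nonneg D)
    (minComplementCount_le_cons t D) (minComplementCount_cons_le_add_one t D)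
    (minComplementCount_le_maxGroupCount D) (maxGroupCount_le_cons t D)
    (maxGroupCount_cons_le_add_one t D)

end SumInfluence

theorem weighted_sum_influence_sensitivity_general {T : Type*}
    (v : T → ℝ) (M : ℝ) (hv : ∀ t : T, |v t| ≤ M)
    (m : ℕ) (hm : 1 ≤ m)
    (φ : Fin m → T → Prop) (p : T → Prop)
    [∀ j, DecidablePred (φ j)] [DecidablePred p]
    (w : Fin m → ℝ)
    (I : Multiset T → ℝ)
    (hI : ∀ D : Multiset T,
      I D = (∑ j, w j * ((D.filter fun t => φ j t ∧ p t).map v).sum)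
            * (Finset.univ.inf' (Finset.univ_nonempty_iff.mpr ⟨⟨0, hm⟩⟩)
                fun j : Fin m => ((D.filter fun t => φ j t ∧ ¬ p t).card : ℝ))
            / ((Finset.univ.sup' (Finset.univ_nonempty_iff.mpr ⟨⟨0, hm⟩⟩)
                fun j : Fin m => ((D.filter (φ j)).card : ℝ)) + 1))
    (D D' : Multiset T)
    (hneighbor : (∃ t, D' = t ::ₘ D) ∨ (∃ t, D = t ::ₘ D')) :
    |I D - I D'| ≤ 2 * M * ∑ j, |w j| := by
  have : Nonempty (Fin m) := ⟨⟨0, hm⟩⟩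
  obtain rfl : I = sumInfluence v w φ p := funext hI
  rcases hneighbor with ⟨t, rfl⟩ | ⟨t, rfl⟩
  · rw [abs_sub_comm]
    exact abs_sumInfluence_cons_sub_le t D hv
  · exact abs_sumInfluence_cons_sub_le t D' hv

/-- Sensitivity of the weighted SUM influence function for general user questions:
for neighboring databases `D, D'`, `|I(p; D) − I(p; D')| ≤ 2 M Σ_j |w_j|`. -/
theorem weighted_sum_influence_sensitivity {T : Type*}
    (v : T → ℝ) (M : ℝ) (hM : 0 ≤ M) (hv : ∀ t : T, |v t| ≤ M)
    (m : ℕ) (hm : 1 ≤ m)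
    (φ : Fin m → T → Prop) (p : T → Prop)
    [∀ j, DecidablePred (φ j)] [DecidablePred p]
    (w : Fin m → ℝ)
    (I : Multiset T → ℝ)
    (hI : ∀ D : Multiset T,
      I D = (∑ j, w j * ((D.filter fun t => φ j t ∧ p t).map v).sum)
            * (Finset.univ.inf' (Finset.univ_nonempty_iff.mpr ⟨⟨0, hm⟩⟩)
                fun j : Fin m => ((D.filter fun t => φ j t ∧ ¬ p t).card : ℝ))
            / ((Finset.univ.sup' (Finset.univ_nonempty_iff.mpr ⟨⟨0, hm⟩⟩)
                fun j : Fin m => ((D.filter (φ j)).card : ℝ)) + 1))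
    (D D' : Multiset T)
    (hneighbor : (∃ t, D' = t ::ₘ D) ∨ (∃ t, D = t ::ₘ D')) :
    |I D - I D'| ≤ 2 * M * ∑ j, |w j| :=
  weighted_sum_influence_sensitivity_general v M hv m hm φ p w I hI D D' hneighbor
end
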